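/- arXiv:1103.1945 — 2 statements merged into one kernel-verified Lean document; each statement's English description precedes it below -/
import Mathlib

section
/- Let μ be a probability measure on ℝ with infinite compact support, with orthonormal polynomials {p_n}, CD kernel K_n, and Jacobi matrix J (the tridiagonal matrix of multiplication by x in the basis {p_n}). For λ ∈ ℝ, let A_λ be the (n+1)×(n+1) matrix obtained from the top-left (n+1)×(n+1) block J_{n+1} of J by adding λ to its bottom-right diagonal entry, and let μ_{n+1,λ} be its spectral measure for the first standard basis vector e_1, i.e. μ_{n+1,λ} = Σ_{j=1}^{n+1} |⟨e_1, v_j⟩|² δ_{x_j} where x_j are the (distinct) eigenvalues of A_λ with orthonormal eigenvectors v_j. Then for each eigenvalue x_j of A_λ, μ_{n+1,λ}({x_j}) = 1 / K_n(x_j, x_j; μ). -/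
/-
Let `v` be a unit eigenvector of `A_λ` for the eigenvalue `t`. Rows `0, …, n-1` of `A_λ` are those
of the Jacobi matrix `J`, and they encode the recurrence `t p_m(t) = ∑_{k ≤ m+1} J_{m k} p_k(t)`
with `J_{m,m+1} ≠ 0`. These `n` equations determine a vector from its first entry, so `v` is
proportional to `(p_k(t))_k`; since `p_0 = ±1`, normalising `v` gives `v_0² K_n(t,t) = 1`, and
`v_0²` is the mass of the spectral measure at `t`.
-/

open MeasureTheory Polynomial Filter Matrix
open scoped ENNReal Real

/-- The topological support of a measure. -/
def measSupport {α : Type*} [TopologicalSpace α] [MeasurableSpace α] (μ : Measure α) : Set α :=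
  {x | ∀ U : Set α, IsOpen U → x ∈ U → μ U ≠ 0}

namespace Matrix

variable {R : Type*} {n : ℕ}

theorem eq_zero_of_mulVec_castSucc_eq_mul [Semiring R] [NoZeroDivisors R]
    {M : Matrix (Fin (n + 1)) (Fin (n + 1)) R}
    (hM : ∀ i k : Fin (n + 1), i.val + 1 < k.val → M i k = 0)
    (hsup : ∀ i : Fin n, M i.castSucc i.succ ≠ 0) {t : R} {d : Fin (n + 1) → R}
    (hd : ∀ i : Fin n, (M *ᵥ d) i.castSucc = t * d i.castSucc) (h0 : d 0 = 0) :
    d = 0 := by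
  suffices h : ∀ m : ℕ, ∀ k : Fin (n + 1), k.val ≤ m → d k = 0 from
    funext fun k => h k k le_rfl
  intro m
  induction m with
  | zero =>
    intro k hk
    rwa [show k = 0 from Fin.ext (Nat.le_zero.mp hk)]
  | succ m ih =>
    intro k hk
    rcases hk.lt_or_eq with hk | hk
    · exact ih k (Nat.lt_succ_iff.mp hk)
    obtain ⟨i, rfl⟩ : ∃ i : Fin n, i.succ = k := ⟨⟨m, by omega⟩, Fin.ext (by simp [hk])⟩
    -- row `i` of the equation, all of whose other terms vanish, solves for `d (i + 1)`
    have hrow := hd i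
    have him : (i : ℕ) = m := by rw [Fin.val_succ] at hk; omega
    rw [ih i.castSucc (by simp [him]), mul_zero, mulVec, dotProduct,
      Finset.sum_eq_single i.succ _ (by simp)] at hrow
    · exact (mul_eq_zero.mp hrow).resolve_left (hsup i)
    intro k _ hk'
    by_cases hkm : k.val ≤ m
    · rw [ih k hkm, mul_zero]
    · rw [hM _ _ (by simp only [Fin.val_castSucc]; omega), zero_mul]

theorem add_smul_single_last_mulVec_castSucc [CommSemiring R]
    (M : Matrix (Fin (n + 1)) (Fin (n + 1)) R) (c : R) (u : Fin (n + 1) → R) (i : Fin n) :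
    ((M + c • single (Fin.last n) (Fin.last n) 1) *ᵥ u) i.castSucc = (M *ᵥ u) i.castSucc := by
  simp [add_mulVec, single_mulVec, Fin.castSucc_ne_last]

end Matrix

theorem MeasureTheory.Measure.sum_smul_dirac_apply_singleton {α ι : Type*} [MeasurableSpace α]
    [MeasurableSingletonClass α] [Fintype ι] {x : ι → α} (hx : Function.Injective x)
    (w : ι → ℝ≥0∞) (j : ι) :
    (∑ l, w l • dirac (x l)) {x j} = w j := by
  rw [coe_finsetSum, Finset.sum_apply, Finset.sum_eq_single j (fun l _ hl => ?_) (by simp)]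
  · simp
  · simp [dirac_apply', hx.ne hl]

def IsOrthonormalSeq (μ : Measure ℝ) (p : ℕ → ℝ[X]) : Prop :=
  ∀ m l, ∫ x, (p m).eval x * (p l).eval x ∂μ = if m = l then 1 else 0

noncomputable def jacobiMatrix (μ : Measure ℝ) (p : ℕ → ℝ[X]) (n : ℕ) : Matrix (Fin (n + 1)) (Fin (n + 1)) ℝ :=
  of fun i j => ∫ x, x * (p i).eval x * (p j).eval x ∂μ

namespace IsOrthonormalSeq

variable {μ : Measure ℝ} {p : ℕ → ℝ[X]}

theorem memLp_two_eval (horth : IsOrthonormalSeq μ p) (m : ℕ) :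
    MemLp (fun x => (p m).eval x) 2 μ := by
  rw [memLp_two_iff_integrable_sq (p m).continuous.aestronglyMeasurable]
  refine Integrable.of_integral_ne_zero ?_
  simp [sq, horth m m]

theorem integrable_eval_mul_eval (horth : IsOrthonormalSeq μ p) (m l : ℕ) :
    Integrable (fun x => (p m).eval x * (p l).eval x) μ :=
  (horth.memLp_two_eval m).integrable_mul (horth.memLp_two_eval l)

theorem ne_zero (horth : IsOrthonormalSeq μ p) (m : ℕ) : p m ≠ 0 := by
  intro h
  simpa [h] using horth m m

def toSequence (horth : IsOrthonormalSeq μ p) (hdeg : ∀ m, (p m).natDegree = m) :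
    Polynomial.Sequence ℝ where
  elems' := p
  degree_eq' m := by rw [degree_eq_natDegree (horth.ne_zero m), hdeg]

theorem exists_eq_sum_smul (horth : IsOrthonormalSeq μ p) (hdeg : ∀ m, (p m).natDegree = m)
    {q : ℝ[X]} {N : ℕ} (hq : q.natDegree ≤ N) :
    ∃ c : ℕ → ℝ, ∑ k ∈ Finset.range (N + 1), c k • p k = q := by
  have hmem : q ∈ Submodule.span ℝ (p '' ↑(Finset.range (N + 1))) := by
    change q ∈ Submodule.span ℝ (horth.toSequence hdeg '' ↑(Finset.range (N + 1)))
    rw [Finset.coe_range, (horth.toSequence hdeg).span_degreeLT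
      (fun i _ => (leadingCoeff_ne_zero.mpr (horth.ne_zero i)).isUnit), mem_degreeLT]
    exact (degree_le_natDegree.trans (WithBot.coe_le_coe.mpr hq)).trans_lt
      (WithBot.coe_lt_coe.mpr N.lt_succ_self)
  exact (Submodule.mem_span_image_finset_iff_exists_fun' ℝ).mp hmem

theorem integral_eval_sum_smul_mul (horth : IsOrthonormalSeq μ p)
    (c : ℕ → ℝ) (s : Finset ℕ) (l : ℕ) :
    ∫ x, (∑ k ∈ s, c k • p k).eval x * (p l).eval x ∂μ = if l ∈ s then c l else 0 := by
  simp only [eval_finsetSum, eval_smul, smul_eq_mul, Finset.sum_mul, mul_assoc]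
  rw [integral_finsetSum _ fun k _ => (horth.integrable_eval_mul_eval k l).const_mul (c k)]
  simp [integral_const_mul, horth _ l]

theorem eq_sum_integral_smul (horth : IsOrthonormalSeq μ p) (hdeg : ∀ m, (p m).natDegree = m)
    {q : ℝ[X]} {N : ℕ} (hq : q.natDegree ≤ N) :
    q = ∑ k ∈ Finset.range (N + 1), (∫ x, q.eval x * (p k).eval x ∂μ) • p k := by
  obtain ⟨c, rfl⟩ := horth.exists_eq_sum_smul hdeg hq
  refine Finset.sum_congr rfl fun k hk => ?_
  rw [horth.integral_eval_sum_smul_mul, if_pos hk]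

theorem integral_eval_mul_eq_zero_of_natDegree_lt (horth : IsOrthonormalSeq μ p)
    (hdeg : ∀ m, (p m).natDegree = m) {q : ℝ[X]} {l : ℕ} (hl : q.natDegree < l) :
    ∫ x, q.eval x * (p l).eval x ∂μ = 0 := by
  obtain ⟨c, hc⟩ := horth.exists_eq_sum_smul hdeg (le_refl q.natDegree)
  rw [← hc, horth.integral_eval_sum_smul_mul, if_neg (by simpa using hl.not_ge)]

theorem eval_zero_sq [IsProbabilityMeasure μ] (horth : IsOrthonormalSeq μ p)
    (hdeg : ∀ m, (p m).natDegree = m) (t : ℝ) :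
    (p 0).eval t ^ 2 = 1 := by
  obtain ⟨b, hb⟩ := natDegree_eq_zero.mp (hdeg 0)
  simpa [← hb, sq] using horth 0 0

theorem natDegree_X_mul_eq (horth : IsOrthonormalSeq μ p) (hdeg : ∀ m, (p m).natDegree = m)
    (m : ℕ) : (X * p m).natDegree = m + 1 := by
  rw [natDegree_X_mul (horth.ne_zero m), hdeg]

section JacobiMatrix

variable {n : ℕ}

theorem jacobiMatrix_apply (i k : Fin (n + 1)) :
    jacobiMatrix μ p n i k = ∫ x, (X * p i).eval x * (p k).eval x ∂μ := by
  simp [jacobiMatrix]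

theorem jacobiMatrix_apply_eq_zero_of_lt (horth : IsOrthonormalSeq μ p)
    (hdeg : ∀ m, (p m).natDegree = m) {i k : Fin (n + 1)} (hik : i.val + 1 < k.val) :
    jacobiMatrix μ p n i k = 0 := by
  rw [jacobiMatrix_apply]
  exact horth.integral_eval_mul_eq_zero_of_natDegree_lt hdeg
    (by rwa [horth.natDegree_X_mul_eq hdeg])

theorem jacobiMatrix_castSucc_succ_ne_zero (horth : IsOrthonormalSeq μ p)
    (hdeg : ∀ m, (p m).natDegree = m) (i : Fin n) :
    jacobiMatrix μ p n i.castSucc i.succ ≠ 0 := by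
  intro hzero
  have hcoeff : ∫ x, (X * p i).eval x * (p (i + 1)).eval x ∂μ = 0 := by
    simpa [jacobiMatrix_apply] using hzero
  have hexp := horth.eq_sum_integral_smul hdeg (horth.natDegree_X_mul_eq hdeg i).le
  rw [Finset.sum_range_succ, hcoeff, zero_smul, add_zero] at hexp
  have hle : (X * p i).natDegree ≤ (i : ℕ) := by
    rw [hexp]
    refine natDegree_sum_le_of_forall_le _ _ fun k hk => (natDegree_smul_le _ _).trans ?_
    rw [hdeg]
    exact Nat.lt_succ_iff.mp (Finset.mem_range.mp hk)
  rw [horth.natDegree_X_mul_eq hdeg] at hle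
  omega

theorem jacobiMatrix_mulVec_eval_castSucc (horth : IsOrthonormalSeq μ p)
    (hdeg : ∀ m, (p m).natDegree = m) (t : ℝ) (i : Fin n) :
    (jacobiMatrix μ p n *ᵥ fun k => (p k).eval t) i.castSucc = t * (p i).eval t := by
  have hexp := congrArg (eval t) <| horth.eq_sum_integral_smul hdeg
    ((horth.natDegree_X_mul_eq hdeg i).trans_le i.isLt)
  simp only [eval_mul, eval_X, eval_finsetSum, eval_smul, smul_eq_mul] at hexp
  rw [hexp, Finset.sum_range]
  simp [mulVec, dotProduct, jacobiMatrix_apply]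

theorem eval_zero_smul_eq_smul_eval_of_jacobiMatrix_mulVec (horth : IsOrthonormalSeq μ p)
    (hdeg : ∀ m, (p m).natDegree = m) {t : ℝ} {u : Fin (n + 1) → ℝ}
    (hu : ∀ i : Fin n, (jacobiMatrix μ p n *ᵥ u) i.castSucc = t * u i.castSucc) :
    (p 0).eval t • u = u 0 • fun k : Fin (n + 1) => (p k).eval t := by
  rw [← sub_eq_zero]
  refine Matrix.eq_zero_of_mulVec_castSucc_eq_mul
    (fun i k => horth.jacobiMatrix_apply_eq_zero_of_lt hdeg)
    (horth.jacobiMatrix_castSucc_succ_ne_zero hdeg) (t := t) (fun i => ?_) ?_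
  · simp only [mulVec_sub, mulVec_smul, Pi.sub_apply, Pi.smul_apply, smul_eq_mul, hu,
      horth.jacobiMatrix_mulVec_eval_castSucc hdeg, Fin.val_castSucc]
    ring
  · simp [mul_comm]

end JacobiMatrix

end IsOrthonormalSeq

theorem stmt_8_general
    (μ : Measure ℝ) [IsProbabilityMeasure μ]
    (p : ℕ → Polynomial ℝ)
    (hdeg : ∀ m, (p m).natDegree = m)
    (horth : ∀ m l, ∫ x, (p m).eval x * (p l).eval x ∂μ = if m = l then 1 else 0)
    (n : ℕ) (lam : ℝ)
    (J : Matrix (Fin (n + 1)) (Fin (n + 1)) ℝ)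
    (hJ : ∀ i j : Fin (n + 1), J i j = ∫ x, x * (p i).eval x * (p j).eval x ∂μ)
    (A : Matrix (Fin (n + 1)) (Fin (n + 1)) ℝ)
    (hA : A = J + lam • Matrix.single (Fin.last n) (Fin.last n) 1)
    (x : Fin (n + 1) → ℝ) (hx : Function.Injective x)
    (v : Fin (n + 1) → Fin (n + 1) → ℝ)
    (heig : ∀ j, A.mulVec (v j) = x j • v j)
    (honv : ∀ j l, ∑ i, v j i * v l i = if j = l then 1 else 0)
    (μspec : Measure ℝ)
    (hμspec : μspec = ∑ j, ENNReal.ofReal ((v j 0) ^ 2) • Measure.dirac (x j)) :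
    ∀ j, μspec {x j} =
      ENNReal.ofReal (1 / ∑ m ∈ Finset.range (n + 1), ((p m).eval (x j)) ^ 2) := by
  intro j
  obtain rfl : J = jacobiMatrix μ p n := Matrix.ext hJ
  have horth : IsOrthonormalSeq μ p := horth
  have hrows (i : Fin n) :
      (jacobiMatrix μ p n *ᵥ v j) i.castSucc = x j * v j i.castSucc := by
    rw [← add_smul_single_last_mulVec_castSucc _ lam, ← hA, heig]
    rfl
  have hprop := congrFun (horth.eval_zero_smul_eq_smul_eval_of_jacobiMatrix_mulVec hdeg hrows)
  have hnorm : v j 0 ^ 2 * ∑ m ∈ Finset.range (n + 1), (p m).eval (x j) ^ 2 = 1 :=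
    calc v j 0 ^ 2 * ∑ m ∈ Finset.range (n + 1), (p m).eval (x j) ^ 2
        = ∑ k, ((p 0).eval (x j) * v j k) ^ 2 := by
          rw [Finset.mul_sum, Finset.sum_range]
          refine Finset.sum_congr rfl fun k _ => ?_
          rw [← smul_eq_mul _ (v j k), ← Pi.smul_apply, hprop k]
          simp [mul_pow]
      _ = (p 0).eval (x j) ^ 2 * ∑ k, v j k * v j k := by
          rw [Finset.mul_sum]
          exact Finset.sum_congr rfl fun k _ => by ring
      _ = 1 := by rw [horth.eval_zero_sq hdeg, honv, if_pos rfl, one_mul]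
  rw [hμspec, Measure.sum_smul_dirac_apply_singleton hx, eq_one_div_of_mul_eq_one_left hnorm]

/-- For a probability measure `μ` on `ℝ` with infinite compact support,
orthonormal polynomials `p m` and CD kernel `K_n`, let `A_λ` be the top-left
`(n+1)×(n+1)` block of the Jacobi matrix of `μ` (whose `(i,j)` entry is
`∫ x p_i(x) p_j(x) dμ`) with `λ` added to its bottom-right entry, and let
`μ_{n+1,λ} = ∑_j ⟨e_1, v_j⟩² δ_{x_j}` be its spectral measure for `e_1`,
where `x_j` are its (distinct) eigenvalues with orthonormal eigenvectors
`v_j`. Then `μ_{n+1,λ}({x_j}) = 1 / K_n(x_j, x_j; μ)` for each `j`. -/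
theorem stmt_8
    (μ : Measure ℝ) [IsProbabilityMeasure μ]
    (hcomp : IsCompact (measSupport μ))
    (hinf : (measSupport μ).Infinite)
    (p : ℕ → Polynomial ℝ)
    (hdeg : ∀ m, (p m).natDegree = m)
    (hlead : ∀ m, 0 < (p m).leadingCoeff)
    (horth : ∀ m l, ∫ x, (p m).eval x * (p l).eval x ∂μ = if m = l then 1 else 0)
    (n : ℕ) (lam : ℝ)
    (J : Matrix (Fin (n + 1)) (Fin (n + 1)) ℝ)
    (hJ : ∀ i j : Fin (n + 1), J i j = ∫ x, x * (p i).eval x * (p j).eval x ∂μ)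
    (A : Matrix (Fin (n + 1)) (Fin (n + 1)) ℝ)
    (hA : A = J + lam • Matrix.single (Fin.last n) (Fin.last n) 1)
    (x : Fin (n + 1) → ℝ) (hx : Function.Injective x)
    (v : Fin (n + 1) → Fin (n + 1) → ℝ)
    (heig : ∀ j, A.mulVec (v j) = x j • v j)
    (honv : ∀ j l, ∑ i, v j i * v l i = if j = l then 1 else 0)
    (μspec : Measure ℝ)
    (hμspec : μspec = ∑ j, ENNReal.ofReal ((v j 0) ^ 2) • Measure.dirac (x j)) :
    ∀ j, μspec {x j} =
      ENNReal.ofReal (1 / ∑ m ∈ Finset.range (n + 1), ((p m).eval (x j)) ^ 2) :=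
  stmt_8_general μ p hdeg horth n lam J hJ A hA x hx v heig honv μspec hμspec
end

section
/- Let μ be a probability measure on ℝ with infinite support contained in [−M, M], with CD kernel K_n(x,y;μ) = Σ_{j=0}^n p_j(x)p_j(y). Then for every k ∈ ℕ, every n ≥ k, and every real x with |x| > M, K_{n−k}(x, x; μ) / K_n(x, x; μ) ≤ (M/|x|)^{2k}. -/
open MeasureTheory Polynomial Filter
open scoped ENNReal Real

/-!
Let `S = K_{n-k}(x,x)` and `P(t) = K_{n-k}(x,t)`, so that `∫ P² dμ = P(x) = S` by orthonormality.
The polynomial `Q(t) = t^k P(t)` has degree `≤ n`, and Cauchy–Schwarz on its coefficients in the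
orthonormal basis (the Christoffel bound) gives `Q(x)² ≤ (∫ Q² dμ) K_n(x,x)`. Since `μ` lives on
`[-M, M]`, `∫ Q² dμ ≤ M^{2k} ∫ P² dμ`, whence `x^{2k} S² ≤ M^{2k} S K_n(x,x)`.
-/

open Finset

section Support

variable {α : Type*} [TopologicalSpace α] [SecondCountableTopology α] [MeasurableSpace α]

lemma measure_compl_measSupport (μ : Measure α) : μ (measSupport μ)ᶜ = 0 := by
  refine measure_null_of_locally_null _ fun y hy => ?_
  simp only [measSupport, Set.mem_compl_iff, Set.mem_ofPred_eq, not_forall, not_not] at hy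
  obtain ⟨U, hU, hyU, hμU⟩ := hy
  exact ⟨U, mem_nhdsWithin_of_mem_nhds (hU.mem_nhds hyU), hμU⟩

lemma ae_mem_of_measSupport_subset {μ : Measure α} {s : Set α} (h : measSupport μ ⊆ s) : ∀ᵐ t ∂μ, t ∈ s :=
  ae_iff.2 <| measure_mono_null (fun _ ht hmem => ht (h hmem)) (measure_compl_measSupport μ)

end Support

lemma nonneg_of_measSupport_subset_Icc {μ : Measure ℝ} [IsProbabilityMeasure μ] {M : ℝ}
    (h : measSupport μ ⊆ Set.Icc (-M) M) : 0 ≤ M := by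
  by_contra! hM
  have hae := ae_mem_of_measSupport_subset h
  rw [Set.Icc_eq_empty (by linarith)] at hae
  simp only [ae_iff, Set.mem_empty_iff_false, not_false_eq_true, Set.ofPred_true,
    measure_univ, one_ne_zero] at hae

lemma Continuous.integrable_of_ae_mem_compact {α : Type*} [TopologicalSpace α] [T2Space α]
    [MeasurableSpace α] [OpensMeasurableSpace α] {μ : Measure α} [IsFiniteMeasure μ]
    {f : α → ℝ} {K : Set α} (hf : Continuous f) (hK : IsCompact K) (h : ∀ᵐ t ∂μ, t ∈ K) :
    Integrable f μ := by
  simpa [IntegrableOn, Measure.restrict_eq_self_of_ae_mem h] using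
    hf.continuousOn.integrableOn_compact (μ := μ) hK

lemma Polynomial.exists_eq_sum_smul_of_natDegree_le {K : Type*} [Field K] {p : ℕ → K[X]}
    (hdeg : ∀ m, (p m).natDegree = m) (hp : ∀ m, p m ≠ 0) {q : K[X]} {n : ℕ}
    (hq : q.natDegree ≤ n) : ∃ d : ℕ → K, ∑ j ∈ range (n + 1), d j • p j = q := by
  let S : Sequence K := ⟨p, fun m => by rw [degree_eq_natDegree (hp m), hdeg m]⟩
  have hspan := S.span_degreeLT (m := n + 1)
    fun m _ => isUnit_iff_ne_zero.2 (leadingCoeff_ne_zero.2 (hp m))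
  have hq' : q ∈ degreeLT K (n + 1) := by
    rw [mem_degreeLT]
    exact (degree_le_of_natDegree_le hq).trans_lt (by exact_mod_cast n.lt_succ_self)
  rw [← hspan, ← Finset.coe_range] at hq'
  exact (Submodule.mem_span_image_finset_iff_exists_fun' K).1 hq'

/-- The polynomial `t ↦ K_n(x, t)`. -/
noncomputable def christoffelDarboux (p : ℕ → ℝ[X]) (n : ℕ) (x : ℝ) : ℝ[X] :=
  ∑ j ∈ range (n + 1), (p j).eval x • p j

lemma eval_christoffelDarboux_self (p : ℕ → ℝ[X]) (n : ℕ) (x : ℝ) :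
    (christoffelDarboux p n x).eval x = ∑ j ∈ range (n + 1), (p j).eval x ^ 2 := by
  simp [christoffelDarboux, eval_finsetSum, sq]

lemma natDegree_christoffelDarboux_le {p : ℕ → ℝ[X]} (hdeg : ∀ m, (p m).natDegree = m)
    (n : ℕ) (x : ℝ) : (christoffelDarboux p n x).natDegree ≤ n := by
  refine natDegree_sum_le_of_forall_le _ _ fun j hj => ?_
  exact (natDegree_smul_le _ _).trans ((hdeg j).trans_le (Nat.lt_succ_iff.mp (mem_range.mp hj)))

section Orthonormal

variable {μ : Measure ℝ} {p : ℕ → ℝ[X]}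

lemma ne_zero_of_orthonormal
    (horth : ∀ m l, ∫ x, (p m).eval x * (p l).eval x ∂μ = if m = l then 1 else 0) (m : ℕ) :
    p m ≠ 0 := by
  intro h
  simpa [h] using horth m m

lemma integral_sq_eval_sum_smul
    (horth : ∀ m l, ∫ x, (p m).eval x * (p l).eval x ∂μ = if m = l then 1 else 0)
    (hint : ∀ q : ℝ[X], Integrable (fun t => q.eval t) μ) (d : ℕ → ℝ) (s : Finset ℕ) :
    ∫ t, ((∑ j ∈ s, d j • p j).eval t) ^ 2 ∂μ = ∑ j ∈ s, d j ^ 2 := by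
  have hint₂ : ∀ j l, Integrable (fun t => d j * (p j).eval t * (d l * (p l).eval t)) μ := by
    intro j l
    convert (hint (p j * p l)).const_mul (d j * d l) using 2 with t
    rw [eval_mul]
    ring
  calc ∫ t, ((∑ j ∈ s, d j • p j).eval t) ^ 2 ∂μ
      = ∫ t, ∑ j ∈ s, ∑ l ∈ s, d j * (p j).eval t * (d l * (p l).eval t) ∂μ := by
        simp only [eval_finsetSum, eval_smul, smul_eq_mul, sq, sum_mul_sum]
    _ = ∑ j ∈ s, ∑ l ∈ s, d j * d l * ∫ t, (p j).eval t * (p l).eval t ∂μ := by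
        rw [integral_finsetSum _ fun j _ => integrable_finsetSum _ fun l _ => hint₂ j l]
        refine sum_congr rfl fun j _ => ?_
        rw [integral_finsetSum _ fun l _ => hint₂ j l]
        refine sum_congr rfl fun l _ => ?_
        rw [← integral_const_mul]
        congr 1 with t
        ring
    _ = ∑ j ∈ s, d j ^ 2 := by
        refine sum_congr rfl fun j hj => ?_
        simp [horth, hj, sq]

/-- The Christoffel bound: the variational characterisation of `1 / K_n(x,x)`, in one direction. -/
lemma sq_eval_le_integral_sq_mul_sum_sq (hdeg : ∀ m, (p m).natDegree = m)
    (horth : ∀ m l, ∫ x, (p m).eval x * (p l).eval x ∂μ = if m = l then 1 else 0)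
    (hint : ∀ q : ℝ[X], Integrable (fun t => q.eval t) μ) {q : ℝ[X]} {n : ℕ}
    (hq : q.natDegree ≤ n) (x : ℝ) :
    q.eval x ^ 2 ≤ (∫ t, q.eval t ^ 2 ∂μ) * ∑ j ∈ range (n + 1), (p j).eval x ^ 2 := by
  obtain ⟨d, rfl⟩ :=
    exists_eq_sum_smul_of_natDegree_le hdeg (ne_zero_of_orthonormal horth) hq
  rw [integral_sq_eval_sum_smul horth hint]
  simpa only [eval_finsetSum, eval_smul, smul_eq_mul] using
    sum_mul_sq_le_sq_mul_sq (range (n + 1)) d fun j => (p j).eval x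

lemma integral_sq_eval_christoffelDarboux
    (horth : ∀ m l, ∫ x, (p m).eval x * (p l).eval x ∂μ = if m = l then 1 else 0)
    (hint : ∀ q : ℝ[X], Integrable (fun t => q.eval t) μ) (n : ℕ) (x : ℝ) :
    ∫ t, (christoffelDarboux p n x).eval t ^ 2 ∂μ = ∑ j ∈ range (n + 1), (p j).eval x ^ 2 :=
  integral_sq_eval_sum_smul horth hint _ _

end Orthonormal

lemma integral_sq_X_pow_mul_le {μ : Measure ℝ} {M : ℝ} (hae : ∀ᵐ t ∂μ, t ∈ Set.Icc (-M) M)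
    (hint : ∀ q : ℝ[X], Integrable (fun t => q.eval t) μ) (q : ℝ[X]) (k : ℕ) :
    ∫ t, ((X ^ k * q).eval t) ^ 2 ∂μ ≤ M ^ (2 * k) * ∫ t, q.eval t ^ 2 ∂μ := by
  rw [← integral_const_mul]
  have hint_sq : ∀ r : ℝ[X], Integrable (fun t => r.eval t ^ 2) μ := fun r =>
    (hint (r ^ 2)).congr (ae_of_all _ fun _ => eval_pow 2)
  refine integral_mono_ae (hint_sq _) ((hint_sq q).const_mul _) (hae.mono fun t ht => ?_)
  have ht2 : t ^ 2 ≤ M ^ 2 := sq_le_sq' ht.1 ht.2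
  dsimp only
  rw [eval_mul, eval_pow, eval_X, mul_pow, ← pow_mul, mul_comm k 2, pow_mul, pow_mul]
  gcongr

lemma div_le_div_of_mul_sq_le_mul {a b s c : ℝ} (ha : 0 < a) (hb : 0 ≤ b) (hs : 0 ≤ s)
    (hc : 0 ≤ c) (h : a * s ^ 2 ≤ b * s * c) : s / c ≤ b / a := by
  rcases hs.eq_or_lt with rfl | hs
  · simpa using div_nonneg hb ha.le
  rcases hc.eq_or_lt with rfl | hc
  · simpa using div_nonneg hb ha.le
  rw [div_le_div_iff₀ hc ha]
  nlinarith

theorem stmt_14_general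
    (μ : Measure ℝ) [IsProbabilityMeasure μ] (M : ℝ)
    (hsupp : measSupport μ ⊆ Set.Icc (-M) M)
    (p : ℕ → Polynomial ℝ)
    (hdeg : ∀ m, (p m).natDegree = m)
    (horth : ∀ m l, ∫ x, (p m).eval x * (p l).eval x ∂μ = if m = l then 1 else 0)
    (k n : ℕ) (hkn : k ≤ n) (x : ℝ) (hx : M < |x|) :
    (∑ j ∈ Finset.range (n - k + 1), ((p j).eval x) ^ 2) /
        (∑ j ∈ Finset.range (n + 1), ((p j).eval x) ^ 2) ≤
      (M / |x|) ^ (2 * k) := by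
  have hx₀ : x ≠ 0 := abs_pos.1 ((nonneg_of_measSupport_subset_Icc hsupp).trans_lt hx)
  have hae := ae_mem_of_measSupport_subset hsupp
  have hint : ∀ q : ℝ[X], Integrable (fun t => q.eval t) μ := fun q =>
    q.continuous.integrable_of_ae_mem_compact isCompact_Icc hae
  set S := ∑ j ∈ range (n - k + 1), (p j).eval x ^ 2
  set K := ∑ j ∈ range (n + 1), (p j).eval x ^ 2
  set P := christoffelDarboux p (n - k) x
  have hdegP : P.natDegree ≤ n - k := natDegree_christoffelDarboux_le hdeg _ _
  have hdegQ : (X ^ k * P).natDegree ≤ n :=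
    natDegree_mul_le.trans (by rw [natDegree_X_pow]; omega)
  have hkey : x ^ (2 * k) * S ^ 2 ≤ M ^ (2 * k) * S * K := calc
    x ^ (2 * k) * S ^ 2 = (X ^ k * P).eval x ^ 2 := by
      rw [eval_mul, eval_pow, eval_X, eval_christoffelDarboux_self]; ring
    _ ≤ (∫ t, (X ^ k * P).eval t ^ 2 ∂μ) * K :=
      sq_eval_le_integral_sq_mul_sum_sq hdeg horth hint hdegQ x
    _ ≤ M ^ (2 * k) * (∫ t, P.eval t ^ 2 ∂μ) * K := by
      gcongr
      exact integral_sq_X_pow_mul_le hae hint P k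
    _ = M ^ (2 * k) * S * K := by rw [integral_sq_eval_christoffelDarboux horth hint]
  rw [div_pow, (even_two_mul k).pow_abs]
  exact div_le_div_of_mul_sq_le_mul ((even_two_mul k).pow_pos hx₀)
    ((even_two_mul k).pow_nonneg M) (by positivity) (by positivity) hkey

/-- For `μ` a probability measure on `ℝ` with infinite support in `[-M, M]`
and CD kernel `K_n(x,x) = ∑_{j≤n} p_j(x)²`, for every `k`, every `n ≥ k`, and
every real `x` with `|x| > M`, one has
`K_{n-k}(x,x;μ)/K_n(x,x;μ) ≤ (M/|x|)^{2k}`. -/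
theorem stmt_14
    (μ : Measure ℝ) [IsProbabilityMeasure μ] (M : ℝ)
    (hsupp : measSupport μ ⊆ Set.Icc (-M) M)
    (hinf : (measSupport μ).Infinite)
    (p : ℕ → Polynomial ℝ)
    (hdeg : ∀ m, (p m).natDegree = m)
    (hlead : ∀ m, 0 < (p m).leadingCoeff)
    (horth : ∀ m l, ∫ x, (p m).eval x * (p l).eval x ∂μ = if m = l then 1 else 0)
    (k n : ℕ) (hkn : k ≤ n) (x : ℝ) (hx : M < |x|) :
    (∑ j ∈ Finset.range (n - k + 1), ((p j).eval x) ^ 2) /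
        (∑ j ∈ Finset.range (n + 1), ((p j).eval x) ^ 2) ≤
      (M / |x|) ^ (2 * k) :=
  stmt_14_general μ M hsupp p hdeg horth k n hkn x hx
end
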